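/- Let G be a profinite group, E a finite extension of ℚ_p with ring of integers 𝒪_E and residue field k_E, and ρ : G → GL_n(𝒪_E) a continuous representation with residual representation ρ̄ : G → GL_n(k_E). If there exists g₀ ∈ G such that ρ̄(g₀) has eigenvalue 1 with algebraic multiplicity one, then there exists g ∈ G such that ρ(g) has eigenvalue 1 with algebraic multiplicity one. -/

import Mathlib

/-!
Let `q` be the order of the residue field `k` and `b` the prime-to-`p` part of `|GL_n(k)|`.
Compactness of `G` splits `g₀ = v * w ^ b` into commuting factors, where `v` is a `q ^ j`-th
power for every `j`. Since `charpoly (M ^ q) = charpoly M` over `k` and `ρ̄ (w ^ b) ^ (q ^ a) = 1`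
for some `a`, the residual characteristic polynomials of `g₀`, of `v` and of every `q ^ j`-th
root of `v` coincide. As `𝒪` is finite over `ℤ_p`, it is `𝔪`-adically complete, so Hensel's
lemma lifts the simple residual eigenvalue `1` of each of these matrices to a unique eigenvalue
`≡ 1`. Uniqueness makes the lifted eigenvalue `α` of `ρ v` a `q ^ j`-th power of an element
`≡ 1`, hence `α ≡ 1 mod 𝔪 ^ (j + 1)` for all `j`, and `α = 1`.
-/

open IsLocalRing Polynomial

section AdicCompleteness

theorem IsPrecomplete.of_finite {R M : Type*} [CommRing R] [AddCommGroup M] [Module R M]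
    (I : Ideal R) [IsPrecomplete I R] [Module.Finite R M] : IsPrecomplete I M := by
  rw [← AdicCompletion.of_surjective_iff]
  intro y
  obtain ⟨t, rfl⟩ := AdicCompletion.ofTensorProduct_surjective_of_finite I M y
  induction t using TensorProduct.induction_on with
  | zero => exact ⟨0, by simp⟩
  | tmul r x =>
    obtain ⟨s, rfl⟩ := AdicCompletion.of_surjective I R r
    exact ⟨s • x, by
      rw [AdicCompletion.ofTensorProduct_tmul, map_smul, ← algebraMap_smul (AdicCompletion I R) s]
      rfl⟩
  | add t₁ t₂ h₁ h₂ =>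
    obtain ⟨x₁, hx₁⟩ := h₁
    obtain ⟨x₂, hx₂⟩ := h₂
    exact ⟨x₁ + x₂, by simp [hx₁, hx₂]⟩

theorem IsPrecomplete.of_le_of_pow_le {R M : Type*} [CommRing R] [AddCommGroup M] [Module R M]
    {I J : Ideal R} [IsPrecomplete J M] (hJI : J ≤ I) {h : ℕ} (hIJ : I ^ h ≤ J) :
    IsPrecomplete I M := by
  refine ⟨fun f hf => ?_⟩
  have hpow : ∀ k, I ^ ((h + 1) * k) ≤ J ^ k := fun k => by
    rw [pow_mul]
    exact Ideal.pow_right_mono ((Ideal.pow_le_pow_right h.le_succ).trans hIJ) k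
  obtain ⟨L, hL⟩ := IsPrecomplete.prec ‹_› (f := fun k => f ((h + 1) * k))
    fun hkl => (hf (Nat.mul_le_mul_left _ hkl)).mono (Submodule.smul_mono_left (hpow _))
  exact ⟨L, fun m => (hf (Nat.le_mul_of_pos_left m h.succ_pos)).trans
    ((hL m).mono (Submodule.smul_mono_left (Ideal.pow_right_mono hJI m)))⟩

variable {R S : Type*} [CommRing R] [CommRing S] [IsLocalRing R] [IsLocalRing S] [Algebra R S]

theorem isLocalHom_algebraMap_of_isIntegral [Algebra.IsIntegral R S] :
    IsLocalHom (algebraMap R S) :=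
  ((local_hom_TFAE (algebraMap R S)).out 0 4).mpr
    (eq_maximalIdeal (Ideal.isMaximal_comap_of_isIntegral_of_isMaximal _))

theorem maximalIdeal_le_radical_map_maximalIdeal [Algebra.IsIntegral R S] :
    maximalIdeal S ≤ ((maximalIdeal R).map (algebraMap R S)).radical := by
  rw [Ideal.radical_eq_sInf]
  refine le_sInf fun P ⟨hP, hPprime⟩ => ?_
  have hcomap : (P.comap (algebraMap R S)).IsMaximal := by
    rw [← (maximalIdeal.isMaximal R).eq_of_le (Ideal.comap_ne_top _ hPprime.ne_top)
      (Ideal.map_le_iff_le_comap.mp hP)]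
    exact maximalIdeal.isMaximal R
  exact (eq_maximalIdeal (Ideal.isMaximal_of_isIntegral_of_isMaximal_comap P hcomap)).ge

theorem isAdicComplete_maximalIdeal_of_finite [IsNoetherianRing R]
    [IsAdicComplete (maximalIdeal R) R] [Module.Finite R S] :
    IsAdicComplete (maximalIdeal S) S := by
  have : IsNoetherianRing S := isNoetherian_of_tower R inferInstance
  have hloc : IsLocalHom (algebraMap R S) := isLocalHom_algebraMap_of_isIntegral
  have : IsPrecomplete (maximalIdeal R) S := .of_finite _
  have : IsPrecomplete ((maximalIdeal R).map (algebraMap R S)) S :=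
    IsPrecomplete.map_algebraMap_iff.mpr this
  have hle : (maximalIdeal R).map (algebraMap R S) ≤ maximalIdeal S :=
    ((local_hom_TFAE (algebraMap R S)).out 0 2).mp hloc
  obtain ⟨h, hh⟩ := Ideal.exists_pow_le_of_le_radical_of_fg
    (maximalIdeal_le_radical_map_maximalIdeal (R := R)) (maximalIdeal S).fg_of_isNoetherianRing
  have : IsPrecomplete (maximalIdeal S) S := .of_le_of_pow_le hle hh
  exact { }

end AdicCompleteness

section SimpleResidualRoots

variable {R : Type*} [CommRing R] [IsLocalRing R]

theorem exists_isRoot_residue_eq [HenselianRing R (maximalIdeal R)] {f : R[X]} (hf : f.Monic)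
    {c : ResidueField R} (h : (f.map (residue R)).rootMultiplicity c = 1) :
    ∃ a, f.IsRoot a ∧ residue R a = c := by
  obtain ⟨a₀, rfl⟩ := residue_surjective c
  have hne : f.map (residue R) ≠ 0 := (hf.map _).ne_zero
  have hroot : (f.map (residue R)).IsRoot (residue R a₀) :=
    (rootMultiplicity_pos hne).mp (by omega)
  have hder : ¬ (derivative (f.map (residue R))).IsRoot (residue R a₀) := fun hd =>
    absurd ((one_lt_rootMultiplicity_iff_isRoot hne).mpr ⟨hroot, hd⟩) (by omega)
  rw [IsRoot, eval_map_apply] at hroot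
  rw [derivative_map, IsRoot, eval_map_apply] at hder
  obtain ⟨a, ha, haa₀⟩ := HenselianRing.is_henselian f hf a₀
    (Ideal.Quotient.eq_zero_iff_mem.mp hroot) (isUnit_iff_ne_zero.mpr hder)
  exact ⟨a, ha, Ideal.Quotient.eq.mpr haa₀⟩

theorem eq_of_isRoot_of_residue_eq {f : R[X]} {c : ResidueField R}
    (h : (f.map (residue R)).rootMultiplicity c = 1) {a b : R}
    (ha : f.IsRoot a) (hb : f.IsRoot b) (hac : residue R a = c) (hbc : residue R b = c) :
    a = b := by
  obtain ⟨g, rfl⟩ := dvd_iff_isRoot.mpr ha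
  rw [Polynomial.map_mul, Polynomial.map_sub, map_X, map_C, hac] at h
  have hg : g.map (residue R) ≠ 0 := fun h0 => by simp [h0] at h
  rw [rootMultiplicity_mul (mul_ne_zero (X_sub_C_ne_zero c) hg),
    rootMultiplicity_X_sub_C_self] at h
  have hgc : ¬ (g.map (residue R)).IsRoot c := fun hr => by
    have := (rootMultiplicity_pos hg).mpr hr
    omega
  rw [IsRoot, eval_mul, eval_sub, eval_X, eval_C] at hb
  have hu : IsUnit (g.eval b) := (residue_ne_zero_iff_isUnit _).mp fun h0 =>
    hgc (by rw [IsRoot, ← hbc, eval_map_apply, h0])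
  exact (sub_eq_zero.mp (hu.mul_left_eq_zero.mp hb)).symm

end SimpleResidualRoots

section PowSubOne

variable {R : Type*} [CommRing R] {I : Ideal R} {q : ℕ}

theorem pow_sub_one_mem_pow_succ (hq : (q : R) ∈ I) {x : R} {j : ℕ} (hx : x - 1 ∈ I ^ j)
    (hj : j ≠ 0) : x ^ q - 1 ∈ I ^ (j + 1) := by
  have hxI : Ideal.Quotient.mk I x = 1 := by
    rw [← sub_eq_zero, ← map_one (Ideal.Quotient.mk I), ← map_sub, Ideal.Quotient.eq_zero_iff_mem]
    exact Ideal.pow_le_self hj hx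
  have hsum : ∑ i ∈ Finset.range q, x ^ i ∈ I := by
    rw [← Ideal.Quotient.eq_zero_iff_mem, map_sum]
    simp only [map_pow, hxI, one_pow, Finset.sum_const, Finset.card_range, nsmul_one]
    rw [← map_natCast (Ideal.Quotient.mk I)]
    exact Ideal.Quotient.eq_zero_iff_mem.mpr hq
  rw [← geom_sum_mul, mul_comm, pow_succ]
  exact Ideal.mul_mem_mul hx hsum

theorem pow_pow_sub_one_mem_pow_succ (hq : (q : R) ∈ I) {x : R} (hx : x - 1 ∈ I) (j : ℕ) :
    x ^ q ^ j - 1 ∈ I ^ (j + 1) := by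
  induction j with
  | zero => simpa using hx
  | succ j ih =>
    rw [pow_succ q j, pow_mul]
    exact pow_sub_one_mem_pow_succ hq ih j.succ_ne_zero

end PowSubOne

section Charpoly

variable {n : Type*} [Fintype n] [DecidableEq n]

theorem Matrix.isRoot_charpoly_pow {R : Type*} [CommRing R] {M : Matrix n n R} {t : R}
    (h : M.charpoly.IsRoot t) (k : ℕ) : (M ^ k).charpoly.IsRoot (t ^ k) := by
  rw [IsRoot, eval_charpoly] at h ⊢
  rw [map_pow, ← Commute.geom_sum₂_mul (Matrix.scalar_commute _ (fun _ => Commute.all _ _) _),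
    det_mul, h, mul_zero]

variable {K : Type*} [Field K] [Fintype K]

theorem FiniteField.Matrix.charpoly_pow_card_pow (M : Matrix n n K) (j : ℕ) :
    (M ^ Fintype.card K ^ j).charpoly = M.charpoly := by
  induction j with
  | zero => simp
  | succ j ih => rw [pow_succ, pow_mul, FiniteField.Matrix.charpoly_pow_card, ih]

theorem FiniteField.Matrix.charpoly_mul_eq_of_commute_of_pow_eq_one {A U : Matrix n n K}
    (hAU : Commute A U) {a : ℕ} (hU : U ^ Fintype.card K ^ a = 1) :
    (A * U).charpoly = A.charpoly := by
  rw [← charpoly_pow_card_pow (A * U) a, hAU.mul_pow, hU, mul_one, charpoly_pow_card_pow]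

theorem Matrix.rootMultiplicity_one_charpoly_eq_one_of_pow_pow_eq {R : Type*} [CommRing R]
    [IsLocalRing R] [IsAdicComplete (maximalIdeal R) R] {V : Matrix n n R} {q : ℕ}
    (hq : (q : R) ∈ maximalIdeal R)
    (hroots : ∀ j, ∃ W : Matrix n n R, W ^ q ^ j = V ∧
      ((W.map (residue R)).charpoly).rootMultiplicity 1 = 1) :
    V.charpoly.rootMultiplicity 1 = 1 := by
  obtain ⟨V', hV', hV⟩ := hroots 0
  rw [pow_zero, pow_one] at hV'
  subst hV'
  rw [charpoly_map] at hV
  obtain ⟨α, hα, hα1⟩ := exists_isRoot_residue_eq V'.charpoly_monic hV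
  have hαpow : ∀ j, α - 1 ∈ maximalIdeal R ^ (j + 1) := fun j => by
    obtain ⟨W, rfl, hW⟩ := hroots j
    rw [charpoly_map] at hW
    obtain ⟨β, hβ, hβ1⟩ := exists_isRoot_residue_eq W.charpoly_monic hW
    have hβα : β ^ q ^ j = α := eq_of_isRoot_of_residue_eq hV (isRoot_charpoly_pow hβ _) hα
      (by rw [map_pow, hβ1, one_pow]) hα1
    rw [← hβα]
    refine pow_pow_sub_one_mem_pow_succ hq ?_ j
    rw [← Ideal.Quotient.eq_zero_iff_mem, map_sub, map_one, sub_eq_zero]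
    exact hβ1
  have hα1 : α = 1 := by
    rw [← sub_eq_zero]
    refine IsHausdorff.haus' (I := maximalIdeal R) _ fun j => ?_
    rw [SModEq.zero, smul_eq_mul, Ideal.mul_top]
    exact Ideal.pow_le_pow_right j.le_succ (hαpow j)
  refine le_antisymm ?_ ((rootMultiplicity_pos V'.charpoly_monic.ne_zero).mpr (hα1 ▸ hα))
  simpa [hV] using le_rootMultiplicity_map (V'.charpoly_monic.map (residue R)).ne_zero (1 : R)

end Charpoly

theorem FiniteField.exists_coprime_card_dvd_mul_card_pow (K : Type*) [Field K] [Fintype K]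
    {N : ℕ} (hN : N ≠ 0) :
    ∃ a b : ℕ, (Fintype.card K).Coprime b ∧ N ∣ b * Fintype.card K ^ a := by
  obtain ⟨r, hp, hq⟩ := FiniteField.card K (ringChar K)
  refine ⟨N.factorization (ringChar K), ordCompl[ringChar K] N,
    hq ▸ (Nat.coprime_ordCompl hp hN).pow_left _, ?_⟩
  conv_lhs => rw [← Nat.ordProj_mul_ordCompl_eq_self N (ringChar K)]
  rw [mul_comm, hq, ← pow_mul]
  exact mul_dvd_mul_left _ (pow_dvd_pow _ (Nat.le_mul_of_pos_left _ r.pos))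

theorem exists_commute_mul_pow_eq_of_coprime {G : Type*} [Group G] [TopologicalSpace G]
    [IsTopologicalGroup G] [CompactSpace G] [T2Space G] (g : G) {m b : ℕ} (hmb : m.Coprime b) :
    ∃ v w : G, Commute v (w ^ b) ∧ v * w ^ b = g ∧ ∀ j, ∃ x : G, x ^ m ^ j = v := by
  let F : ℕ → Set G := fun j =>
    {x | x * g = g * x} ∩ Set.range (· ^ m ^ j) ∩ Set.range fun w => g * (w ^ b)⁻¹
  have hclosed : ∀ j, IsClosed (F j) := fun j =>
    ((isClosed_eq (continuous_id.mul continuous_const) (continuous_const.mul continuous_id)).inter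
      (isCompact_range (continuous_pow _)).isClosed).inter
      (isCompact_range (continuous_const.mul (continuous_pow b).inv)).isClosed
  have hanti : ∀ j, F (j + 1) ⊆ F j := by
    rintro j x ⟨⟨hxg, y, rfl⟩, hx⟩
    exact ⟨⟨hxg, y ^ m, by simp only [← pow_mul, ← pow_succ']⟩, hx⟩
  -- Bezout: `u m^j + u' b = 1` splits `g = g^(u m^j) * g^(u' b)`.
  have hne : ∀ j, (F j).Nonempty := fun j => by
    obtain ⟨u, u', huu'⟩ := Nat.isCoprime_iff_coprime.mpr (hmb.pow_left j)
    refine ⟨g ^ (u * (m ^ j : ℕ)), ⟨⟨((Commute.refl g).zpow_left _).eq, g ^ u, ?_⟩, g ^ u', ?_⟩⟩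
    · simp only [← zpow_natCast, ← _root_.zpow_mul]
    · simp only [← zpow_natCast, ← _root_.zpow_mul]
      rw [eq_sub_of_add_eq' huu']
      group
  obtain ⟨v, hv⟩ := IsCompact.nonempty_iInter_of_sequence_nonempty_isCompact_isClosed F hanti hne
    (hclosed 0).isCompact hclosed
  obtain ⟨⟨hvg, -⟩, w, hw⟩ := Set.mem_iInter.mp hv 0
  have hwb : w ^ b = v⁻¹ * g := by rw [← hw]; group
  refine ⟨v, w, ?_, by rw [hwb]; group, fun j => (Set.mem_iInter.mp hv j).1.2⟩
  rw [hwb, Commute, SemiconjBy, mul_assoc, ← hvg]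
  group

theorem stmt_2_general (p : ℕ) [Fact p.Prime]
    (G : Type*) [Group G] [TopologicalSpace G] [IsTopologicalGroup G]
    [CompactSpace G] [T2Space G]
    (𝒪 : Type*) [CommRing 𝒪] [IsLocalRing 𝒪]
    [Algebra ℤ_[p] 𝒪] [Module.Finite ℤ_[p] 𝒪]
    (n : ℕ)
    (ρ : G →* GL (Fin n) 𝒪)
    (g₀ : G)
    (hg₀ : Polynomial.rootMultiplicity 1
        (Matrix.charpoly (((ρ g₀ : GL (Fin n) 𝒪) : Matrix (Fin n) (Fin n) 𝒪).map
          (IsLocalRing.residue 𝒪))) = 1) :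
    ∃ g : G, Polynomial.rootMultiplicity 1
        (Matrix.charpoly ((ρ g : GL (Fin n) 𝒪) : Matrix (Fin n) (Fin n) 𝒪)) = 1 := by
  have : IsLocalHom (algebraMap ℤ_[p] 𝒪) := isLocalHom_algebraMap_of_isIntegral
  have : Finite (ResidueField 𝒪) :=
    ResidueField.finite_of_finite (Finite.of_equiv _ (PadicInt.residueField (p := p)).symm.toEquiv)
  let := Fintype.ofFinite (ResidueField 𝒪)
  have : IsAdicComplete (maximalIdeal 𝒪) 𝒪 := isAdicComplete_maximalIdeal_of_finite (R := ℤ_[p])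
  have hq : (Fintype.card (ResidueField 𝒪) : 𝒪) ∈ maximalIdeal 𝒪 := by
    rw [← Ideal.Quotient.eq_zero_iff_mem, map_natCast]
    exact FiniteField.cast_card_eq_zero (ResidueField 𝒪)
  let ρ' : G →* GL (Fin n) (ResidueField 𝒪) :=
    (Units.map (residue 𝒪).mapMatrix.toMonoidHom).comp ρ
  have hρ' : ∀ g, (ρ' g : Matrix (Fin n) (Fin n) (ResidueField 𝒪)) = (ρ g).val.map (residue 𝒪) :=
    fun g => rfl
  obtain ⟨a, b, hqb, hN⟩ := FiniteField.exists_coprime_card_dvd_mul_card_pow (ResidueField 𝒪)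
    (Nat.card_pos (α := GL (Fin n) (ResidueField 𝒪))).ne'
  obtain ⟨v, w, hvw, rfl, hv⟩ := exists_commute_mul_pow_eq_of_coprime g₀ hqb
  have hU : ((ρ' (w ^ b)).val) ^ Fintype.card (ResidueField 𝒪) ^ a = 1 := by
    obtain ⟨c, hc⟩ := hN
    rw [← Units.val_pow_eq_pow_val, map_pow, ← pow_mul, hc, pow_mul, pow_card_eq_one', one_pow,
      Units.val_one]
  have hres : (ρ' (v * w ^ b)).val.charpoly = (ρ' v).val.charpoly := by
    rw [map_mul, Units.val_mul, FiniteField.Matrix.charpoly_mul_eq_of_commute_of_pow_eq_one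
      (hvw.map ρ').units_val hU]
  refine ⟨v, Matrix.rootMultiplicity_one_charpoly_eq_one_of_pow_pow_eq hq fun j => ?_⟩
  obtain ⟨x, hx⟩ := hv j
  refine ⟨ρ x, by rw [← Units.val_pow_eq_pow_val, ← map_pow, hx], ?_⟩
  rw [← hρ', ← FiniteField.Matrix.charpoly_pow_card_pow _ j, ← Units.val_pow_eq_pow_val,
    ← map_pow, hx, ← hres, hρ', hg₀]

/-- Let `G` be a profinite group, `E/ℚ_p` finite with ring of integers `𝒪`
(modelled as a compact topological local domain, finite and free over `ℤ_p`) and residue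
field `k = 𝒪/𝔪`. If `ρ : G → GL_n(𝒪)` is a continuous representation whose residual
representation has a group element `g₀` with eigenvalue `1` of algebraic multiplicity one
(multiplicity of the root `1` of the characteristic polynomial), then some `ρ(g)` has
eigenvalue `1` with algebraic multiplicity one. -/
theorem stmt_2 (p : ℕ) [Fact p.Prime]
    (G : Type*) [Group G] [TopologicalSpace G] [IsTopologicalGroup G]
    [CompactSpace G] [T2Space G] [TotallyDisconnectedSpace G]
    (𝒪 : Type*) [CommRing 𝒪] [IsDomain 𝒪] [IsLocalRing 𝒪]
    [TopologicalSpace 𝒪] [IsTopologicalRing 𝒪] [CompactSpace 𝒪]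
    [Algebra ℤ_[p] 𝒪] [Module.Finite ℤ_[p] 𝒪] [Module.Free ℤ_[p] 𝒪]
    (n : ℕ)
    (ρ : G →* GL (Fin n) 𝒪)
    (hρ : Continuous fun g : G => ((ρ g : GL (Fin n) 𝒪) : Matrix (Fin n) (Fin n) 𝒪))
    (g₀ : G)
    (hg₀ : Polynomial.rootMultiplicity 1
        (Matrix.charpoly (((ρ g₀ : GL (Fin n) 𝒪) : Matrix (Fin n) (Fin n) 𝒪).map
          (IsLocalRing.residue 𝒪))) = 1) :
    ∃ g : G, Polynomial.rootMultiplicity 1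
        (Matrix.charpoly ((ρ g : GL (Fin n) 𝒪) : Matrix (Fin n) (Fin n) 𝒪)) = 1 :=
  stmt_2_general p G 𝒪 n ρ g₀ hg₀
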